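/- Suppose Λ : [0,∞) → [0,∞) is measurable, bounded, with Λ(t) → 0 as t → ∞, and satisfies the integral inequality ∫₀^T Λ(t) dt ≤ θ + B ∫₀^T (e^{Λ(t)} − 1) dt for all T and some constants θ ≥ 0, 0 ≤ B < 1. Then ∫₀^∞ Λ(t) dt < ∞ and ∫₀^∞ (e^{Λ(t)} − 1) dt < ∞. -/

import Mathlib

open MeasureTheory Real Filter Set Topology

/-!
Since `Λ → 0`, eventually `B e^Λ ≤ b := (1 + B) / 2 < 1`, and then
`B (e^Λ - 1) ≤ B Λ e^Λ ≤ b Λ`. Splitting `∫₀^T` at such a time `T₀`, the hypothesis gives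
`∫₀^T Λ ≤ θ + B ∫₀^{T₀} (e^Λ - 1) + b ∫₀^T Λ`, a bound on `∫₀^T Λ` uniform in `T`.
Integrability of `e^Λ - 1` follows from `e^Λ - 1 ≤ e^C Λ` for `0 ≤ Λ ≤ C`.
-/

theorem exp_sub_one_le_mul_exp (x : ℝ) : exp x - 1 ≤ x * exp x := by
  have h := mul_le_mul_of_nonneg_right (one_sub_le_exp_neg x) (exp_pos x).le
  rw [← exp_add, neg_add_cancel, exp_zero] at h
  linarith

theorem norm_exp_sub_one_le_exp_mul {x C : ℝ} (hx : 0 ≤ x) (hxC : x ≤ C) :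
    ‖exp x - 1‖ ≤ exp C * x := by
  rw [norm_of_nonneg (sub_nonneg.2 (one_le_exp hx))]
  calc exp x - 1 ≤ x * exp x := exp_sub_one_le_mul_exp x
    _ ≤ exp C * x := by rw [mul_comm]; gcongr

theorem Filter.Tendsto.eventually_mul_exp_sub_one_le {α : Type*} {l : Filter α} {f : α → ℝ}
    {B b : ℝ} (hf : Tendsto f l (𝓝 0)) (hf0 : ∀ᶠ t in l, 0 ≤ f t) (hB : 0 ≤ B) (hBb : B < b) :
    ∀ᶠ t in l, B * (Real.exp (f t) - 1) ≤ b * f t := by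
  have hlim : Tendsto (fun t => B * Real.exp (f t)) l (𝓝 B) := by
    simpa using (continuous_exp.tendsto 0 |>.comp hf).const_mul B
  filter_upwards [hlim.eventually (eventually_le_nhds hBb), hf0] with t hexp hft
  calc B * (Real.exp (f t) - 1) ≤ B * (f t * Real.exp (f t)) :=
        mul_le_mul_of_nonneg_left (exp_sub_one_le_mul_exp _) hB
    _ = f t * (B * Real.exp (f t)) := by ring
    _ ≤ f t * b := by gcongr
    _ = b * f t := mul_comm _ _

theorem MeasureTheory.LocallyIntegrable.intervalIntegrable {E : Type*} [NormedAddCommGroup E]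
    {f : ℝ → E} {μ : Measure ℝ} (hf : LocallyIntegrable f μ) (a b : ℝ) :
    IntervalIntegrable f μ a b :=
  (hf.integrableOn_isCompact isCompact_uIcc).intervalIntegrable

section Bootstrap

variable {f g : ℝ → ℝ} {a θ B b : ℝ}

theorem intervalIntegral_le_div_of_le_add_mul_integral (hf0 : ∀ t, 0 ≤ f t)
    (hf : LocallyIntegrable f) (hg : LocallyIntegrable g) (hb0 : 0 ≤ b) (hb1 : b < 1)
    {T₀ T : ℝ} (haT₀ : a ≤ T₀) (hT₀T : T₀ ≤ T) (hgf : ∀ t ∈ Icc T₀ T, B * g t ≤ b * f t)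
    (hineq : ∫ t in a..T, f t ≤ θ + B * ∫ t in a..T, g t) :
    ∫ t in a..T, f t ≤ (θ + B * ∫ t in a..T₀, g t) / (1 - b) := by
  have hsplit : B * ∫ t in a..T, g t = B * (∫ t in a..T₀, g t) + ∫ t in T₀..T, B * g t := by
    rw [← intervalIntegral.integral_add_adjacent_intervals (hg.intervalIntegrable a T₀)
      (hg.intervalIntegrable T₀ T), intervalIntegral.integral_const_mul, mul_add]
  have htail : ∫ t in T₀..T, B * g t ≤ b * ∫ t in a..T, f t :=
    calc ∫ t in T₀..T, B * g t ≤ ∫ t in T₀..T, b * f t :=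
          intervalIntegral.integral_mono_on hT₀T ((hg.intervalIntegrable _ _).const_mul B)
            ((hf.intervalIntegrable _ _).const_mul b) hgf
      _ = b * ∫ t in T₀..T, f t := intervalIntegral.integral_const_mul _ _
      _ ≤ b * ∫ t in a..T, f t := by
          gcongr
          exact intervalIntegral.integral_mono_interval haT₀ hT₀T le_rfl
            (ae_of_all _ hf0) (hf.intervalIntegrable _ _)
  rw [le_div_iff₀' (by linarith), one_sub_mul]
  linarith

theorem integrableOn_Ioi_of_le_add_mul_integral (hf0 : ∀ t, 0 ≤ f t)
    (hf : LocallyIntegrable f) (hg : LocallyIntegrable g) (hb0 : 0 ≤ b) (hb1 : b < 1)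
    (hgf : ∀ᶠ t in atTop, B * g t ≤ b * f t)
    (hineq : ∀ T, a ≤ T → ∫ t in a..T, f t ≤ θ + B * ∫ t in a..T, g t) :
    IntegrableOn f (Ioi a) := by
  obtain ⟨T₀, hT₀⟩ := eventually_atTop.1 (hgf.and (eventually_ge_atTop a))
  refine integrableOn_Ioi_of_intervalIntegral_norm_bounded
    ((θ + B * ∫ t in a..T₀, g t) / (1 - b)) a
    (fun T => (hf.integrableOn_isCompact isCompact_Icc).mono_set Ioc_subset_Icc_self)
    tendsto_id (eventually_ge_atTop T₀ |>.mono fun T hT => ?_)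
  simp only [id, norm_of_nonneg (hf0 _)]
  exact intervalIntegral_le_div_of_le_add_mul_integral hf0 hf hg hb0 hb1 (hT₀ T₀ le_rfl).2 hT
    (fun t ht => (hT₀ t ht.1).1) (hineq T ((hT₀ T₀ le_rfl).2.trans hT))

end Bootstrap

theorem integral_inequality_bootstrap_general (Λ : ℝ → ℝ) (θ B : ℝ)
    (hB0 : 0 ≤ B) (hB1 : B < 1)
    (hmeas : Measurable Λ)
    (hnonneg : ∀ t, 0 ≤ Λ t)
    (hbdd : ∃ C : ℝ, ∀ t, Λ t ≤ C)
    (hlim : Filter.Tendsto Λ Filter.atTop (nhds 0))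
    (hineq : ∀ T : ℝ, 0 ≤ T →
      ∫ t in (0:ℝ)..T, Λ t ≤ θ + B * ∫ t in (0:ℝ)..T, (exp (Λ t) - 1)) :
    IntegrableOn Λ (Set.Ioi 0) ∧ IntegrableOn (fun t => exp (Λ t) - 1) (Set.Ioi 0) := by
  obtain ⟨C, hC⟩ := hbdd
  have hdom : ∀ t, ‖exp (Λ t) - 1‖ ≤ exp C * Λ t := fun t =>
    norm_exp_sub_one_le_exp_mul (hnonneg t) (hC t)
  have hmeasE : AEStronglyMeasurable (fun t => exp (Λ t) - 1) :=
    (hmeas.exp.sub_const 1).aestronglyMeasurable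
  have hΛloc : LocallyIntegrable Λ :=
    (memLp_top_of_bound hmeas.aestronglyMeasurable C
      (ae_of_all _ fun t => (norm_of_nonneg (hnonneg t)).trans_le (hC t))).locallyIntegrable le_top
  have hEloc : LocallyIntegrable (fun t => exp (Λ t) - 1) :=
    (hΛloc.smul (exp C)).mono hmeasE (ae_of_all _ fun t =>
      (hdom t).trans_eq (norm_of_nonneg (mul_nonneg (exp_pos C).le (hnonneg t))).symm)
  have hΛint : IntegrableOn Λ (Ioi 0) :=
    integrableOn_Ioi_of_le_add_mul_integral hnonneg hΛloc hEloc (by linarith) (by linarith)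
      (hlim.eventually_mul_exp_sub_one_le (.of_forall hnonneg) hB0 (by linarith : B < (1 + B) / 2))
      hineq
  exact ⟨hΛint, (hΛint.const_mul (exp C)).mono' hmeasE.restrict (ae_of_all _ hdom)⟩

/-- If `Λ : [0,∞) → [0,∞)` is measurable, bounded, tends to `0` at infinity, and satisfies
`∫₀^T Λ ≤ θ + B ∫₀^T (e^Λ − 1)` for all `T`, with `θ ≥ 0` and `0 ≤ B < 1`, then
`∫₀^∞ Λ < ∞` and `∫₀^∞ (e^Λ − 1) < ∞`. -/
theorem integral_inequality_bootstrap (Λ : ℝ → ℝ) (θ B : ℝ)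
    (hθ : 0 ≤ θ) (hB0 : 0 ≤ B) (hB1 : B < 1)
    (hmeas : Measurable Λ)
    (hnonneg : ∀ t, 0 ≤ Λ t)
    (hbdd : ∃ C : ℝ, ∀ t, Λ t ≤ C)
    (hlim : Filter.Tendsto Λ Filter.atTop (nhds 0))
    (hineq : ∀ T : ℝ, 0 ≤ T →
      ∫ t in (0:ℝ)..T, Λ t ≤ θ + B * ∫ t in (0:ℝ)..T, (exp (Λ t) - 1)) :
    IntegrableOn Λ (Set.Ioi 0) ∧ IntegrableOn (fun t => exp (Λ t) - 1) (Set.Ioi 0) :=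
  integral_inequality_bootstrap_general Λ θ B hB0 hB1 hmeas hnonneg hbdd hlim hineq
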